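/- An L-convex polyomino P is uniquely determined by its pair of projection vectors (H_P, V_P): if two L-convex polyominoes have the same horizontal projection vector and the same vertical projection vector, they are equal (as sets of cells, up to the normalizing translation placing the bounding box at the origin). -/
import Mathlib


/-- Two cells of `ℤ × ℤ` are adjacent if they share an edge. -/
def CellAdj (a b : ℤ × ℤ) : Prop :=
  (a.1 = b.1 ∧ (a.2 = b.2 + 1 ∨ b.2 = a.2 + 1)) ∨
  (a.2 = b.2 ∧ (a.1 = b.1 + 1 ∨ b.1 = a.1 + 1))

/-- `P` is an L-convex polyomino: it is row convex, column convex, and any two of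
its cells are joined by a path of distinct cells of `P` with at most one change of
direction. Cells are recorded as `(row, column)`. -/
def IsLConvex (P : Finset (ℤ × ℤ)) : Prop :=
  (∀ i j j' j'' : ℤ, (i, j) ∈ P → (i, j'') ∈ P → j ≤ j' → j' ≤ j'' → (i, j') ∈ P) ∧
  (∀ i i' i'' j : ℤ, (i, j) ∈ P → (i'', j) ∈ P → i ≤ i' → i' ≤ i'' → (i', j) ∈ P) ∧
  (∀ a ∈ P, ∀ b ∈ P, ∃ (k : ℕ) (c : ℕ → ℤ × ℤ),
    c 0 = a ∧ c k = b ∧ (∀ i ≤ k, c i ∈ P) ∧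
    (∀ i < k, CellAdj (c i) (c (i + 1))) ∧
    (∀ i j, i ≤ k → j ≤ k → c i = c j → i = j) ∧
    ((Finset.Ioo 0 k).filter (fun i =>
      (c (i - 1)).1 ≠ (c (i + 1)).1 ∧ (c (i - 1)).2 ≠ (c (i + 1)).2)).card ≤ 1)

/-- Number of cells of `P` in row `i`. -/
def rowCount (P : Finset (ℤ × ℤ)) (i : ℤ) : ℕ := (P.filter (fun c => c.1 = i)).card

/-- Number of cells of `P` in column `j`. -/
def colCount (P : Finset (ℤ × ℤ)) (j : ℤ) : ℕ := (P.filter (fun c => c.2 = j)).card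

lemma sameDir {a b c : ℤ × ℤ} (hab : CellAdj a b) (hbc : CellAdj b c)
    (hne : a ≠ c) (hnoturn : a.1 = c.1 ∨ a.2 = c.2) :
    c.1 - b.1 = b.1 - a.1 ∧ c.2 - b.2 = b.2 - a.2 := by
  obtain ⟨a1, a2⟩ := a; obtain ⟨b1, b2⟩ := b; obtain ⟨c1, c2⟩ := c
  simp only [CellAdj, Prod.mk.injEq, ne_eq, not_and] at *
  omega

lemma straight (k : ℕ) (c : ℕ → ℤ × ℤ)
    (hadj : ∀ i < k, CellAdj (c i) (c (i + 1)))
    (hinj : ∀ i j, i ≤ k → j ≤ k → c i = c j → i = j)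
    (s e : ℕ) (hse : s ≤ e) (hek : e ≤ k)
    (hnt : ∀ i, s < i → i < e → (c (i - 1)).1 = (c (i + 1)).1 ∨ (c (i - 1)).2 = (c (i + 1)).2) :
    (∀ i, s ≤ i → i ≤ e → (c i).1 = (c s).1) ∨ (∀ i, s ≤ i → i ≤ e → (c i).2 = (c s).2) := by
  rcases eq_or_lt_of_le hse with rfl | hlt
  · left; intro i h1 h2
    have : i = s := le_antisymm h2 h1
    rw [this]
  · have hd : ∀ m, s + m < e →
        ((c (s + m + 1)).1 - (c (s + m)).1 = (c (s + 1)).1 - (c s).1 ∧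
         (c (s + m + 1)).2 - (c (s + m)).2 = (c (s + 1)).2 - (c s).2) := by
      intro m
      induction m with
      | zero => intro _; exact ⟨rfl, rfl⟩
      | succ p ih =>
        intro h
        have hp := ih (by omega)
        have hne : c (s + p) ≠ c (s + p + 2) := by
          intro hEq
          have := hinj (s + p) (s + p + 2) (by omega) (by omega) hEq
          omega
        have hnt' := hnt (s + p + 1) (by omega) (by omega)
        have hs := sameDir (hadj (s + p) (by omega)) (hadj (s + p + 1) (by omega)) hne hnt'
        obtain ⟨h1, h2⟩ := hs
        obtain ⟨hp1, hp2⟩ := hp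
        show (c (s + p + 1 + 1)).1 - (c (s + p + 1)).1 = (c (s + 1)).1 - (c s).1 ∧
          (c (s + p + 1 + 1)).2 - (c (s + p + 1)).2 = (c (s + 1)).2 - (c s).2
        exact ⟨by omega, by omega⟩
    have hadj0 := hadj s (by omega)
    rcases hadj0 with ⟨h1, _⟩ | ⟨h2, _⟩
    ·
      left
      have const : ∀ n, s + n ≤ e → (c (s + n)).1 = (c s).1 := by
        intro n
        induction n with
        | zero => intro _; rfl
        | succ m ih =>
          intro h
          have hm := ih (by omega)
          have := (hd m (by omega)).1
          show (c (s + m + 1)).1 = (c s).1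
          omega
      intro i hsi hie
      obtain ⟨n, rfl⟩ : ∃ n, i = s + n := ⟨i - s, by omega⟩
      exact const n hie
    · right
      have const : ∀ n, s + n ≤ e → (c (s + n)).2 = (c s).2 := by
        intro n
        induction n with
        | zero => intro _; rfl
        | succ m ih =>
          intro h
          have hm := ih (by omega)
          have := (hd m (by omega)).2
          show (c (s + m + 1)).2 = (c s).2
          omega
      intro i hsi hie
      obtain ⟨n, rfl⟩ : ∃ n, i = s + n := ⟨i - s, by omega⟩
      exact const n hie

lemma crossing {P : Finset (ℤ × ℤ)} (hP : IsLConvex P) {a b : ℤ × ℤ}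
    (ha : a ∈ P) (hb : b ∈ P) : (a.1, b.2) ∈ P ∨ (b.1, a.2) ∈ P := by
  obtain ⟨k, c, hc0, hck, hmem, hadj, hinj, hturn⟩ := hP.2.2 a ha b hb
  by_cases hT : ∃ t, 0 < t ∧ t < k ∧ (c (t - 1)).1 ≠ (c (t + 1)).1 ∧ (c (t - 1)).2 ≠ (c (t + 1)).2
  · obtain ⟨t, ht0, htk, ht1, ht2⟩ := hT
    have htmem : t ∈ (Finset.Ioo 0 k).filter (fun i =>
        (c (i - 1)).1 ≠ (c (i + 1)).1 ∧ (c (i - 1)).2 ≠ (c (i + 1)).2) := by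
      simp only [Finset.mem_filter, Finset.mem_Ioo]
      exact ⟨⟨ht0, htk⟩, ht1, ht2⟩
    have huniq : ∀ i, 0 < i → i < k → i ≠ t →
        (c (i - 1)).1 = (c (i + 1)).1 ∨ (c (i - 1)).2 = (c (i + 1)).2 := by
      intro i hi0 hik hit
      by_contra hcon
      push_neg at hcon
      have himem : i ∈ (Finset.Ioo 0 k).filter (fun i =>
          (c (i - 1)).1 ≠ (c (i + 1)).1 ∧ (c (i - 1)).2 ≠ (c (i + 1)).2) := by
        simp only [Finset.mem_filter, Finset.mem_Ioo]
        exact ⟨⟨hi0, hik⟩, hcon.1, hcon.2⟩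
      exact hit (Finset.card_le_one.mp hturn i himem t htmem)
    have hct : c t ∈ P := hmem t (le_of_lt htk)
    have d1 := straight k c hadj hinj 0 t (by omega) (by omega)
      (fun i hi1 hi2 => huniq i hi1 (by omega) (by omega))
    have d2 := straight k c hadj hinj t k (by omega) (by omega)
      (fun i hi1 hi2 => huniq i (by omega) hi2 (by omega))
    rcases d1 with d1 | d1 <;> rcases d2 with d2 | d2
    · exfalso
      have e1 : (c (t - 1)).1 = (c 0).1 := d1 (t - 1) (by omega) (by omega)
      have e2 : (c t).1 = (c 0).1 := d1 t (by omega) (by omega)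
      have e3 : (c (t + 1)).1 = (c t).1 := d2 (t + 1) (by omega) (by omega)
      exact ht1 (by omega)
    · -- first segment: row constant (.1), second: column constant (.2) : corner = (a.1, b.2)
      left
      have e1 : (c t).1 = a.1 := by rw [← hc0]; exact d1 t (by omega) (by omega)
      have e2 : b.2 = (c t).2 := by rw [← hck]; exact d2 k (by omega) (by omega)
      have : (a.1, b.2) = c t := Prod.ext e1.symm e2
      rw [this]; exact hct
    · right
      have e1 : (c t).2 = a.2 := by rw [← hc0]; exact d1 t (by omega) (by omega)
      have e2 : b.1 = (c t).1 := by rw [← hck]; exact d2 k (by omega) (by omega)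
      have : (b.1, a.2) = c t := Prod.ext e2 e1.symm
      rw [this]; exact hct
    · exfalso
      have e1 : (c (t - 1)).2 = (c 0).2 := d1 (t - 1) (by omega) (by omega)
      have e2 : (c t).2 = (c 0).2 := d1 t (by omega) (by omega)
      have e3 : (c (t + 1)).2 = (c t).2 := d2 (t + 1) (by omega) (by omega)
      exact ht2 (by omega)
  · push_neg at hT
    have hnt : ∀ i, 0 < i → i < k →
        (c (i - 1)).1 = (c (i + 1)).1 ∨ (c (i - 1)).2 = (c (i + 1)).2 := by
      intro i h1 h2
      by_contra hcon
      push_neg at hcon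
      exact hcon.2 (hT i h1 h2 hcon.1)
    have d := straight k c hadj hinj 0 k (by omega) (by omega)
      (fun i hi1 hi2 => hnt i hi1 hi2)
    rcases d with d | d
    · right
      have : b.1 = a.1 := by rw [← hc0, ← hck]; exact d k (by omega) (by omega)
      rw [this]
      have : (a.1, a.2) = a := rfl
      rw [this]; exact ha
    · left
      have : b.2 = a.2 := by rw [← hc0, ← hck]; exact d k (by omega) (by omega)
      rw [this]
      have : (a.1, a.2) = a := rfl
      rw [this]; exact ha

def rowSet (P : Finset (ℤ × ℤ)) (i : ℤ) : Finset ℤ :=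
  (P.filter (fun c => c.1 = i)).image Prod.snd

def colSet (P : Finset (ℤ × ℤ)) (j : ℤ) : Finset ℤ :=
  (P.filter (fun c => c.2 = j)).image Prod.fst

lemma mem_rowSet {P : Finset (ℤ × ℤ)} {i j : ℤ} : j ∈ rowSet P i ↔ (i, j) ∈ P := by
  simp only [rowSet, Finset.mem_image, Finset.mem_filter]
  constructor
  · rintro ⟨⟨x, y⟩, ⟨hmem, rfl⟩, rfl⟩; exact hmem
  · intro h; exact ⟨(i, j), ⟨h, rfl⟩, rfl⟩

lemma mem_colSet {P : Finset (ℤ × ℤ)} {i j : ℤ} : i ∈ colSet P j ↔ (i, j) ∈ P := by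
  simp only [colSet, Finset.mem_image, Finset.mem_filter]
  constructor
  · rintro ⟨⟨x, y⟩, ⟨hmem, rfl⟩, rfl⟩; exact hmem
  · intro h; exact ⟨(i, j), ⟨h, rfl⟩, rfl⟩

lemma card_rowSet (P : Finset (ℤ × ℤ)) (i : ℤ) : (rowSet P i).card = rowCount P i := by
  apply Finset.card_image_of_injOn
  intro x hx y hy hxy
  simp only [Finset.mem_coe, Finset.mem_filter] at hx hy
  exact Prod.ext (hx.2.trans hy.2.symm) hxy

lemma card_colSet (P : Finset (ℤ × ℤ)) (j : ℤ) : (colSet P j).card = colCount P j := by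
  apply Finset.card_image_of_injOn
  intro x hx y hy hxy
  simp only [Finset.mem_coe, Finset.mem_filter] at hx hy
  exact Prod.ext hxy (hx.2.trans hy.2.symm)

lemma row_chain {P : Finset (ℤ × ℤ)} (hP : IsLConvex P) (i i' : ℤ) :
    rowSet P i ⊆ rowSet P i' ∨ rowSet P i' ⊆ rowSet P i := by
  by_contra hcon
  push_neg at hcon
  obtain ⟨h1, h2⟩ := hcon
  obtain ⟨j, hj, hj'⟩ := Finset.not_subset.mp h1
  obtain ⟨j', hj'2, hj'3⟩ := Finset.not_subset.mp h2
  have hc := crossing hP (mem_rowSet.mp hj) (mem_rowSet.mp hj'2)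
  simp only at hc
  rcases hc with hc | hc
  · exact hj'3 (mem_rowSet.mpr hc)
  · exact hj' (mem_rowSet.mpr hc)

lemma upset {P : Finset (ℤ × ℤ)} (hP : IsLConvex P) {i i' j : ℤ}
    (h : (i, j) ∈ P) (hle : rowCount P i ≤ rowCount P i') : (i', j) ∈ P := by
  rcases row_chain hP i i' with hsub | hsub
  · exact mem_rowSet.mp (hsub (mem_rowSet.mpr h))
  · have heq : rowSet P i' = rowSet P i :=
      Finset.eq_of_subset_of_card_le hsub (by rw [card_rowSet, card_rowSet]; exact hle)
    have : j ∈ rowSet P i' := heq.symm ▸ mem_rowSet.mpr h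
    exact mem_rowSet.mp this

/-- An L-convex polyomino is uniquely determined by its projection vectors: two
L-convex polyominoes with the same horizontal projections (row counts) and the same
vertical projections (column counts) are equal as sets of cells. -/
theorem stmt8 (P P' : Finset (ℤ × ℤ)) (hP : IsLConvex P) (hP' : IsLConvex P')
    (hrows : ∀ i : ℤ, rowCount P i = rowCount P' i)
    (hcols : ∀ j : ℤ, colCount P j = colCount P' j) :
    P = P' := by
  have hcol : ∀ j, colSet P j = colSet P' j := by
    intro j
    have hcard : (colSet P j).card = (colSet P' j).card := by
      rw [card_colSet, card_colSet, hcols]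
    have hsub : colSet P j ⊆ colSet P' j ∨ colSet P' j ⊆ colSet P j := by
      by_contra hcon
      push_neg at hcon
      obtain ⟨h1, h2⟩ := hcon
      obtain ⟨i, hi, hi'⟩ := Finset.not_subset.mp h1
      obtain ⟨i', hi'2, hi'3⟩ := Finset.not_subset.mp h2
      rcases le_total (rowCount P i) (rowCount P i') with hle | hle
      · exact hi'3 (mem_colSet.mpr (upset hP (mem_colSet.mp hi) hle))
      · have hle' : rowCount P' i' ≤ rowCount P' i := by rw [← hrows, ← hrows]; exact hle
        exact hi' (mem_colSet.mpr (upset hP' (mem_colSet.mp hi'2) hle'))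
    rcases hsub with hsub | hsub
    · exact Finset.eq_of_subset_of_card_le hsub (le_of_eq hcard.symm)
    · exact (Finset.eq_of_subset_of_card_le hsub (le_of_eq hcard)).symm
  ext ⟨i, j⟩
  rw [← mem_colSet, ← mem_colSet, hcol]
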